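/- Let m > 1, 0 < β < 1, b > 0 with m + β = 2, and let C > 0. Define ζ* = b(1-β)C^{β-1}(1 - (C/C*)^{2(1-β)}) where C* = (b(m-β)²/(2m(m+β)))^{1/(m-β)}. Then the function w(y,t) = C·max(y - ζ* t, 0)^{1/(1-β)} satisfies the PDE w_t = (w^m)_{yy} - b w^β at every point (y,t) with y ≠ ζ* t, t > 0. -/

import Mathlib

/-!
Since `w(y, t) = F(y - ζ* t)` with `F x = C · max(x, 0)^{1/(1-β)}`, the equation reduces to the
profile equation `-ζ* F' = (F^m)'' - b F^β` away from `x = 0`. For `x < 0` every term vanishes near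
`x`. For `x > 0` all three terms are multiples of `x^{β/(1-β)}`, because `m + β = 2` makes the
exponents `1/(1-β) - 1`, `m/(1-β) - 2` and `β/(1-β)` coincide, and the choice of `ζ*` (through
`C*^{m-β} = b(1-β)²/m`) is exactly what balances the coefficients.
-/

open Real Filter Topology

section TravelingWave

variable {𝕜 : Type*} [NontriviallyNormedField 𝕜] {E : Type*} [NormedAddCommGroup E]
  [NormedSpace 𝕜 E]

theorem deriv_comp_const_sub_mul (f : 𝕜 → E) (y c t : 𝕜) :
    deriv (fun τ => f (y - c * τ)) t = -(c • deriv f (y - c * t)) := by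
  rw [deriv_comp_mul_left c (fun u => f (y - u)) t, deriv_comp_const_sub, smul_neg]

theorem deriv_deriv_comp_sub_const (f : 𝕜 → E) (a x : 𝕜) :
    deriv (deriv fun z => f (z - a)) x = deriv (deriv f) (x - a) := by
  have h : (deriv fun z => f (z - a)) = fun z => deriv f (z - a) :=
    funext fun z => deriv_comp_sub_const (f := f) (a := a) (x := z)
  rw [h, deriv_comp_sub_const]

end TravelingWave

section PositivePartPower

variable {q s : ℝ}

theorem max_zero_rpow_eventuallyEq_of_pos (hs : 0 < s) :
    (fun x : ℝ => max x 0 ^ q) =ᶠ[𝓝 s] fun x => x ^ q := by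
  filter_upwards [lt_mem_nhds hs] with x hx
  rw [max_eq_left hx.le]

theorem max_zero_rpow_eventuallyEq_zero_of_neg (hq : q ≠ 0) (hs : s < 0) :
    (fun x : ℝ => max x 0 ^ q) =ᶠ[𝓝 s] fun _ => 0 := by
  filter_upwards [gt_mem_nhds hs] with x hx
  rw [max_eq_right hx.le, zero_rpow hq]

theorem deriv_max_zero_rpow_of_pos (hs : 0 < s) :
    deriv (fun x : ℝ => max x 0 ^ q) s = q * s ^ (q - 1) := by
  rw [(max_zero_rpow_eventuallyEq_of_pos hs).deriv_eq, Real.deriv_rpow_const]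

theorem deriv_deriv_max_zero_rpow_of_pos (hs : 0 < s) :
    deriv (deriv fun x : ℝ => max x 0 ^ q) s = q * (q - 1) * s ^ (q - 2) := by
  rw [(max_zero_rpow_eventuallyEq_of_pos hs).deriv.deriv_eq, Real.deriv_rpow_const',
    deriv_const_mul_field, Real.deriv_rpow_const]
  ring_nf

theorem deriv_max_zero_rpow_of_neg (hq : q ≠ 0) (hs : s < 0) :
    deriv (fun x : ℝ => max x 0 ^ q) s = 0 := by
  rw [(max_zero_rpow_eventuallyEq_zero_of_neg hq hs).deriv_eq, deriv_const]

theorem deriv_deriv_max_zero_rpow_of_neg (hq : q ≠ 0) (hs : s < 0) :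
    deriv (deriv fun x : ℝ => max x 0 ^ q) s = 0 := by
  rw [(max_zero_rpow_eventuallyEq_zero_of_neg hq hs).deriv.deriv_eq, deriv_const', deriv_const]

end PositivePartPower

noncomputable def wavefront (C β x : ℝ) : ℝ := C * max x 0 ^ (1 / (1 - β))

section Wavefront

variable {m β b C ζ : ℝ}

theorem wavefront_rpow (hC : 0 ≤ C) (x : ℝ) :
    wavefront C β x ^ m = C ^ m * max x 0 ^ (1 / (1 - β) * m) := by
  rw [wavefront, mul_rpow hC (rpow_nonneg (le_max_right _ _) _), ← rpow_mul (le_max_right _ _)]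

theorem wavefront_coeff_eq (hβ1 : β < 1) (hmβ : m + β = 2)
    (hζ : ζ * C = b * (1 - β) * C ^ β - m * C ^ m / (1 - β)) :
    -ζ * (C * (1 / (1 - β))) =
      C ^ m * (1 / (1 - β) * m * (1 / (1 - β) * m - 1)) - b * C ^ β := by
  have h1β : 1 - β ≠ 0 := by linarith
  have hζ' : ζ * C * (1 - β) = b * (1 - β) ^ 2 * C ^ β - m * C ^ m := by
    rw [hζ]; field_simp
  field_simp
  linear_combination -hζ' - m * C ^ m * hmβ

theorem wavefront_ode (hβ0 : 0 < β) (hβ1 : β < 1) (hmβ : m + β = 2) (hC : 0 < C)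
    (hζ : ζ * C = b * (1 - β) * C ^ β - m * C ^ m / (1 - β)) {s : ℝ} (hs : s ≠ 0) :
    -(ζ * deriv (wavefront C β) s) =
      deriv (deriv fun x => wavefront C β x ^ m) s - b * wavefront C β s ^ β := by
  set p := 1 / (1 - β) with hp
  have h1β : 0 < 1 - β := by linarith
  have hp0 : p ≠ 0 := by positivity
  have hF : wavefront C β = fun x => C * max x 0 ^ p := rfl
  have hFm : (fun x => wavefront C β x ^ m) = fun x => C ^ m * max x 0 ^ (p * m) :=
    funext (wavefront_rpow hC.le)
  rw [hFm, deriv_const_mul_field', deriv_const_mul_field, hF, deriv_const_mul_field]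
  beta_reduce
  rcases hs.lt_or_gt with hneg | hpos
  · have hpm0 : p * m ≠ 0 := mul_ne_zero hp0 (by linarith)
    rw [deriv_max_zero_rpow_of_neg hp0 hneg, deriv_deriv_max_zero_rpow_of_neg hpm0 hneg,
      max_eq_right hneg.le, zero_rpow hp0, mul_zero, zero_rpow hβ0.ne']
    ring
  · have hp1 : p - 1 = p * β := by rw [hp]; field_simp; ring
    have hpm2 : p * m - 2 = p * β := by rw [hp]; field_simp; linarith
    rw [deriv_max_zero_rpow_of_pos hpos, deriv_deriv_max_zero_rpow_of_pos hpos,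
      max_eq_left hpos.le, mul_rpow hC.le (rpow_nonneg hpos.le _), ← rpow_mul hpos.le, hp1, hpm2]
    linear_combination s ^ (p * β) * wavefront_coeff_eq hβ1 hmβ hζ

theorem wave_speed_mul_eq (hβ1 : β < 1) (hmβ : m + β = 2) (hb : 0 < b) (hC : 0 < C) :
    b * (1 - β) * C ^ (β - 1) *
        (1 - (C / (b * (m - β) ^ 2 / (2 * m * (m + β))) ^ ((1 : ℝ) / (m - β))) ^ (2 * (1 - β))) *
        C =
      b * (1 - β) * C ^ β - m * C ^ m / (1 - β) := by
  have h1β : 0 < 1 - β := by linarith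
  have hm : 0 < m := by linarith
  have hmβ' : m - β = 2 * (1 - β) := by linarith
  have hA : b * (m - β) ^ 2 / (2 * m * (m + β)) = b * (1 - β) ^ 2 / m := by
    rw [hmβ', hmβ]; field_simp
  have hA0 : 0 ≤ b * (1 - β) ^ 2 / m := by positivity
  have hratio : (C / (b * (1 - β) ^ 2 / m) ^ ((1 : ℝ) / (m - β))) ^ (2 * (1 - β)) =
      m * C ^ (m - β) / (b * (1 - β) ^ 2) := by
    rw [← hmβ', div_rpow hC.le (rpow_nonneg hA0 _), one_div,
      rpow_inv_rpow hA0 (by linarith)]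
    field_simp
  have hβC : C ^ (β - 1) * C = C ^ β := by
    rw [← rpow_add_one hC.ne']; ring_nf
  have hmC : C ^ β * C ^ (m - β) = C ^ m := by
    rw [← rpow_add hC]; ring_nf
  rw [hA, hratio]
  field_simp
  linear_combination (b * (1 - β) ^ 2 - m * C ^ (m - β)) * hβC - m * hmC

end Wavefront

theorem stmt0_general (m β b C : ℝ) (hβ0 : 0 < β) (hβ1 : β < 1)
    (hb : 0 < b) (hC : 0 < C) (hmβ : m + β = 2)
    (Cstar ζ : ℝ)
    (hCstar : Cstar = (b * (m - β) ^ 2 / (2 * m * (m + β))) ^ ((1 : ℝ) / (m - β)))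
    (hζ : ζ = b * (1 - β) * C ^ (β - 1) * (1 - (C / Cstar) ^ (2 * (1 - β))))
    (w : ℝ → ℝ → ℝ)
    (hw : ∀ y t, w y t = C * (max (y - ζ * t) 0) ^ ((1 : ℝ) / (1 - β))) :
    ∀ y t : ℝ, 0 < t → y ≠ ζ * t →
      deriv (fun τ => w y τ) t =
        deriv (deriv (fun z => (w z t) ^ m)) y - b * (w y t) ^ β := by
  intro y t _ hy
  have hspeed : ζ * C = b * (1 - β) * C ^ β - m * C ^ m / (1 - β) := by
    rw [hζ, hCstar]; exact wave_speed_mul_eq hβ1 hmβ hb hC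
  obtain rfl : w = fun y t => wavefront C β (y - ζ * t) := funext₂ hw
  rw [deriv_comp_const_sub_mul, deriv_deriv_comp_sub_const (fun x => wavefront C β x ^ m),
    smul_eq_mul]
  exact wavefront_ode hβ0 hβ1 hmβ hC hspeed (sub_ne_zero.mpr hy)

/-- The explicit traveling wave `w(y,t) = C (y - ζ* t)_+^{1/(1-β)}` satisfies
`w_t = (w^m)_{yy} - b w^β` at every point with `y ≠ ζ* t`, `t > 0`,
when `m + β = 2`. -/
theorem stmt0 (m β b C : ℝ) (hm : 1 < m) (hβ0 : 0 < β) (hβ1 : β < 1)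
    (hb : 0 < b) (hC : 0 < C) (hmβ : m + β = 2)
    (Cstar ζ : ℝ)
    (hCstar : Cstar = (b * (m - β) ^ 2 / (2 * m * (m + β))) ^ ((1 : ℝ) / (m - β)))
    (hζ : ζ = b * (1 - β) * C ^ (β - 1) * (1 - (C / Cstar) ^ (2 * (1 - β))))
    (w : ℝ → ℝ → ℝ)
    (hw : ∀ y t, w y t = C * (max (y - ζ * t) 0) ^ ((1 : ℝ) / (1 - β))) :
    ∀ y t : ℝ, 0 < t → y ≠ ζ * t →
      deriv (fun τ => w y τ) t =
        deriv (deriv (fun z => (w z t) ^ m)) y - b * (w y t) ^ β :=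
  stmt0_general m β b C hβ0 hβ1 hb hC hmβ Cstar ζ hCstar hζ w hw
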